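/- arXiv:math/0510379 — 4 statements merged into one kernel-verified Lean document; each statement's English description precedes it below -/
import Mathlib

section
/- Let A, B, C : ℝⁿ → ℝ be continuous functions such that for every x ≠ 0, C(x) = 0 implies A(x) < 0 or B(x) < 0, and suppose A(x) ≤ 0 for all x. Define S(x) = min{0, A(x)} + min{0, B(x)} − |C(x)|. Then S is negative definite, i.e. S(0) ≤ 0 is attained with S(x) < 0 for all x ≠ 0, provided additionally A(0)=B(0)=C(0)=0. Moreover, if ρ is a continuous positive definite function with ρ(|x|) ≤ −S(x) for all x, then for every x with |C(x)| ≤ ρ(|x|)/2, either A(x) ≤ −ρ(|x|)/4 or B(x) ≤ −ρ(|x|)/4. -/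
theorem stmt1 (n : ℕ)
    (A B C : EuclideanSpace ℝ (Fin n) → ℝ)
    (hA : Continuous A) (hB : Continuous B) (hC : Continuous C)
    (hJQ : ∀ x, x ≠ 0 → C x = 0 → A x < 0 ∨ B x < 0)
    (hAle : ∀ x, A x ≤ 0)
    (hA0 : A 0 = 0) (hB0 : B 0 = 0) (hC0 : C 0 = 0) :
    let S : EuclideanSpace ℝ (Fin n) → ℝ :=
      fun x => min 0 (A x) + min 0 (B x) - |C x|
    (S 0 = 0 ∧ ∀ x, x ≠ 0 → S x < 0) ∧
    (∀ ρ : ℝ → ℝ, Continuous ρ → ρ 0 = 0 → (∀ s : ℝ, 0 < s → 0 < ρ s) →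
      (∀ x, ρ ‖x‖ ≤ -S x) →
      ∀ x, |C x| ≤ ρ ‖x‖ / 2 → A x ≤ -ρ ‖x‖ / 4 ∨ B x ≤ -ρ ‖x‖ / 4) := by
  intro S
  constructor
  · constructor
    · simp [S, hA0, hB0, hC0]
    · intro x hx
      rcases eq_or_ne (C x) 0 with hc | hc
      · rcases hJQ x hx hc with h | h
        · have h1 : min 0 (A x) < 0 := by simp [min_lt_iff, h]
          have h2 : min 0 (B x) ≤ 0 := min_le_left _ _
          simp only [S, hc, abs_zero, sub_zero]
          linarith
        · have h1 : min 0 (B x) < 0 := by simp [min_lt_iff, h]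
          have h2 : min 0 (A x) ≤ 0 := min_le_left _ _
          simp only [S, hc, abs_zero, sub_zero]
          linarith
      · have h1 : 0 < |C x| := abs_pos.mpr hc
        have h2 : min 0 (A x) ≤ 0 := min_le_left _ _
        have h3 : min 0 (B x) ≤ 0 := min_le_left _ _
        simp only [S]
        linarith
  · intro ρ hρc hρ0 hρpos hρS x hCx
    rcases eq_or_lt_of_le (norm_nonneg x) with h0 | h0
    · left
      have : ρ ‖x‖ = 0 := by rw [← h0, hρ0]
      rw [this]
      simpa using hAle x
    · have hρp : 0 < ρ ‖x‖ := hρpos _ h0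
      have hS := hρS x
      simp only [S] at hS
      have hsum : min 0 (A x) + min 0 (B x) ≤ -ρ ‖x‖ / 2 := by linarith
      have : min 0 (A x) ≤ -ρ ‖x‖ / 4 ∨ min 0 (B x) ≤ -ρ ‖x‖ / 4 := by
        by_contra h
        push_neg at h
        linarith [h.1, h.2]
      rcases this with h | h
      · left
        have := min_eq_right (hAle x)
        rw [this] at h
        exact h
      · right
        have hB4 : min 0 (B x) < 0 := lt_of_le_of_lt h (by linarith)
        rcases min_cases 0 (B x) with ⟨he, _⟩ | ⟨he, _⟩
        · rw [he] at hB4; linarith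
        · rw [he] at h; exact h
end

section
/- Let α₁, α₂, α₃ be functions of class K∞ and let V : ℝⁿ → ℝ and L : ℝⁿ → ℝ be continuous with α₁(|x|) ≤ V(x) ≤ α₂(|x|) and |L(x)| ≤ α₃(|x|) for all x. Suppose δ : [0,∞) → [0,∞) satisfies δ(v) ≤ α₁(α₂⁻¹(v)) / (1 + 2 α₃(α₁⁻¹(v))) for all v ≥ 0. Then U(x) := V(x) + δ(V(x)) L(x) satisfies U(x) ≥ (1/2) α₁(α₂⁻¹(V(x))) for all x; consequently U is positive definite and radially unbounded. -/
open Set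

theorem stmt2 (n : ℕ)
    (α₁ α₂ α₃ inv₁ inv₂ : ℝ → ℝ)
    -- α₁, α₂, α₃ of class K∞
    (hα₁ : Continuous α₁ ∧ StrictMonoOn α₁ (Ici 0) ∧ α₁ 0 = 0 ∧
      Filter.Tendsto α₁ Filter.atTop Filter.atTop)
    (hα₂ : Continuous α₂ ∧ StrictMonoOn α₂ (Ici 0) ∧ α₂ 0 = 0 ∧
      Filter.Tendsto α₂ Filter.atTop Filter.atTop)
    (hα₃ : Continuous α₃ ∧ StrictMonoOn α₃ (Ici 0) ∧ α₃ 0 = 0 ∧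
      Filter.Tendsto α₃ Filter.atTop Filter.atTop)
    -- inv₁ and inv₂ are the inverses of α₁ and α₂ on [0,∞)
    (hinv₁ : ∀ v ≥ (0:ℝ), 0 ≤ inv₁ v ∧ α₁ (inv₁ v) = v)
    (hinv₂ : ∀ v ≥ (0:ℝ), 0 ≤ inv₂ v ∧ α₂ (inv₂ v) = v)
    (V L : EuclideanSpace ℝ (Fin n) → ℝ)
    (hV : Continuous V) (hL : Continuous L)
    (hVbnd : ∀ x, α₁ ‖x‖ ≤ V x ∧ V x ≤ α₂ ‖x‖)
    (hLbnd : ∀ x, |L x| ≤ α₃ ‖x‖)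
    (δ : ℝ → ℝ) (hδ0 : ∀ v ≥ (0:ℝ), 0 ≤ δ v)
    (hδ : ∀ v ≥ (0:ℝ), δ v ≤ α₁ (inv₂ v) / (1 + 2 * α₃ (inv₁ v))) :
    let U : EuclideanSpace ℝ (Fin n) → ℝ := fun x => V x + δ (V x) * L x
    (∀ x, (1/2) * α₁ (inv₂ (V x)) ≤ U x) ∧
    (U 0 = 0 ∧ ∀ x, x ≠ 0 → 0 < U x) ∧
    (∀ M : ℝ, ∃ R : ℝ, ∀ x, R ≤ ‖x‖ → M ≤ U x) := by
  obtain ⟨hc1, hm1, h01, ht1⟩ := hα₁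
  obtain ⟨hc2, hm2, h02, ht2⟩ := hα₂
  obtain ⟨hc3, hm3, h03, ht3⟩ := hα₃
  intro U
  have hmono1 : ∀ s t : ℝ, 0 ≤ s → s ≤ t → α₁ s ≤ α₁ t := fun s t hs hst =>
    hm1.monotoneOn hs (le_trans hs hst) hst
  have hmono2 : ∀ s t : ℝ, 0 ≤ s → s ≤ t → α₂ s ≤ α₂ t := fun s t hs hst =>
    hm2.monotoneOn hs (le_trans hs hst) hst
  have hmono3 : ∀ s t : ℝ, 0 ≤ s → s ≤ t → α₃ s ≤ α₃ t := fun s t hs hst =>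
    hm3.monotoneOn hs (le_trans hs hst) hst
  have h1nn : ∀ t : ℝ, 0 ≤ t → 0 ≤ α₁ t := fun t ht => h01 ▸ hmono1 0 t le_rfl ht
  have h3nn : ∀ t : ℝ, 0 ≤ t → 0 ≤ α₃ t := fun t ht => h03 ▸ hmono3 0 t le_rfl ht
  have hVnn : ∀ x, 0 ≤ V x := fun x => le_trans (h1nn _ (norm_nonneg x)) (hVbnd x).1
  have key : ∀ x, (1/2) * α₁ (inv₂ (V x)) ≤ U x := by
    intro x
    have hv : (0:ℝ) ≤ V x := hVnn x
    obtain ⟨hi1nn, hi1⟩ := hinv₁ (V x) hv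
    obtain ⟨hi2nn, hi2⟩ := hinv₂ (V x) hv
    set v := V x with hvdef
    set a := α₁ (inv₂ v) with hadef
    set b := α₃ (inv₁ v) with hbdef
    have hbnn : 0 ≤ b := h3nn _ hi1nn
    have hann : 0 ≤ a := h1nn _ hi2nn
    have hden : (0:ℝ) < 1 + 2 * b := by linarith
    have hx1 : ‖x‖ ≤ inv₁ v := by
      by_contra h
      push_neg at h
      have := hm1 hi1nn (le_trans hi1nn (le_of_lt h)) h
      have h2 := (hVbnd x).1
      rw [hi1] at this
      linarith
    have hx2 : inv₂ v ≤ ‖x‖ := by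
      by_contra h
      push_neg at h
      have := hm2 (norm_nonneg x) (le_trans (norm_nonneg x) (le_of_lt h)) h
      have h2 := (hVbnd x).2
      rw [hi2] at this
      linarith
    have hav : a ≤ v := le_trans (hmono1 _ _ hi2nn hx2) (hVbnd x).1
    have hLb : |L x| ≤ b := le_trans (hLbnd x) (hmono3 _ _ (norm_nonneg x) hx1)
    have hδnn := hδ0 v hv
    have hδa : δ v * (1 + 2 * b) ≤ a := by
      have := hδ v hv
      rw [le_div_iff₀ hden] at this
      exact this
    obtain ⟨hL1, hL2⟩ := abs_le.mp hLb
    show (1/2) * a ≤ v + δ v * L x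
    nlinarith [mul_le_mul_of_nonneg_left hL1 hδnn, mul_le_mul_of_nonneg_right hδa hbnn]
  refine ⟨key, ⟨?_, ?_⟩, ?_⟩
  · -- U 0 = 0
    have hV0 : V 0 = 0 := by
      have h1 := (hVbnd 0).1
      have h2 := (hVbnd 0).2
      rw [norm_zero, h01] at h1
      rw [norm_zero, h02] at h2
      linarith
    have hi20 : inv₂ (0:ℝ) = 0 := by
      obtain ⟨hnn, heq⟩ := hinv₂ 0 le_rfl
      rcases lt_or_eq_of_le hnn with h | h
      · exfalso
        have := hm2 (le_refl (0:ℝ)) (le_of_lt h) h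
        rw [heq, h02] at this
        exact lt_irrefl _ this
      · exact h.symm
    have hδzero : δ 0 = 0 := by
      have h1 := hδ 0 le_rfl
      rw [hi20, h01] at h1
      have h2 := hδ0 0 le_rfl
      rw [zero_div] at h1
      linarith
    show V 0 + δ (V 0) * L 0 = 0
    rw [hV0, hδzero]
    ring
  · -- positive definiteness
    intro x hx
    have hxn : 0 < ‖x‖ := norm_pos_iff.mpr hx
    have hVpos : 0 < V x := by
      have := hm1 (le_refl (0:ℝ)) (le_of_lt hxn) hxn
      rw [h01] at this
      exact lt_of_lt_of_le this (hVbnd x).1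
    obtain ⟨hi2nn, hi2⟩ := hinv₂ (V x) (le_of_lt hVpos)
    have hi2pos : 0 < inv₂ (V x) := by
      rcases lt_or_eq_of_le hi2nn with h | h
      · exact h
      · exfalso; rw [← h, h02] at hi2; linarith
    have hapos : 0 < α₁ (inv₂ (V x)) := by
      have := hm1 (le_refl (0:ℝ)) (le_of_lt hi2pos) hi2pos
      rwa [h01] at this
    calc (0:ℝ) < (1/2) * α₁ (inv₂ (V x)) := by linarith
      _ ≤ U x := key x
  · -- radially unbounded
    intro M
    obtain ⟨s, hs, hs0⟩ := ((ht1.eventually_ge_atTop (2 * M)).and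
      (Filter.eventually_ge_atTop 0)).exists
    obtain ⟨r, hr, hr0⟩ := ((ht1.eventually_ge_atTop (α₂ s)).and
      (Filter.eventually_ge_atTop 0)).exists
    refine ⟨r, fun x hx => ?_⟩
    have hVx : α₂ s ≤ V x := le_trans hr (le_trans (hmono1 r ‖x‖ hr0 hx) (hVbnd x).1)
    obtain ⟨hi2nn, hi2⟩ := hinv₂ (V x) (hVnn x)
    have hsle : s ≤ inv₂ (V x) := by
      by_contra h
      push_neg at h
      have := hm2 hi2nn hs0 h
      rw [hi2] at this
      linarith
    have h1 := hmono1 s _ hs0 hsle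
    have h2 := key x
    have : M ≤ 1/2 * α₁ (inv₂ (V x)) := by linarith
    exact le_trans this h2
end

section
/- Let δₐ : [0,∞) → [0,1] be a C¹ positive definite function and ω : [0,∞) → (0,1] a nonincreasing C¹ function. Define δ(s) = ∫_{s/2}^{s} δₐ(l) δₐ(2l) ω(l) / (1 + 4l²) dl. Then δ is positive definite, of class C¹ (indeed C²), and satisfies |δ′(s)| ≤ ω(s) + (1/2) ω(s/2) for all s ≥ 0. -/
open Set intervalIntegral

theorem stmt3
    (δₐ ω : ℝ → ℝ)
    (hδₐC1 : ContDiff ℝ 1 δₐ)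
    (hδₐ0 : δₐ 0 = 0) (hδₐpos : ∀ s : ℝ, 0 < s → 0 < δₐ s)
    (hδₐ01 : ∀ s ≥ (0:ℝ), 0 ≤ δₐ s ∧ δₐ s ≤ 1)
    (hωC1 : ContDiff ℝ 1 ω)
    (hω01 : ∀ s ≥ (0:ℝ), 0 < ω s ∧ ω s ≤ 1)
    (hωanti : AntitoneOn ω (Ici 0)) :
    let δ : ℝ → ℝ := fun s => ∫ l in (s/2)..s, δₐ l * δₐ (2*l) * ω l / (1 + 4*l^2)
    δ 0 = 0 ∧ (∀ s : ℝ, 0 < s → 0 < δ s) ∧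
    (∀ s ≥ (0:ℝ),
      HasDerivAt δ
        (δₐ s * δₐ (2*s) * ω s / (1 + 4*s^2)
          - (1/2) * (δₐ (s/2) * δₐ s * ω (s/2) / (1 + s^2))) s ∧
      |δₐ s * δₐ (2*s) * ω s / (1 + 4*s^2)
          - (1/2) * (δₐ (s/2) * δₐ s * ω (s/2) / (1 + s^2))|
        ≤ ω s + (1/2) * ω (s/2)) := by
  intro δ
  set g : ℝ → ℝ := fun l => δₐ l * δₐ (2*l) * ω l / (1 + 4*l^2) with hg_def
  have hgcont : Continuous g := by
    apply Continuous.div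
    · exact ((hδₐC1.continuous.mul (hδₐC1.continuous.comp (by continuity))).mul
        hωC1.continuous)
    · continuity
    · intro x; positivity
  refine ⟨by simp [δ], ?_, ?_⟩
  · intro s hs
    have hlt : s/2 < s := by linarith
    apply intervalIntegral.intervalIntegral_pos_of_pos_on
      (hgcont.intervalIntegrable _ _) ?_ hlt
    intro x hx
    have hx0 : 0 < x := by
      have := hx.1; linarith
    have h1 := hδₐpos x hx0
    have h2 := hδₐpos (2*x) (by linarith)
    have h3 := (hω01 x (le_of_lt hx0)).1
    positivity
  · intro s hs
    have hderiv : HasDerivAt δ (g s - g (s/2) * (1/2)) s := by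
      have hδeq : δ = fun t => (∫ l in (0:ℝ)..t, g l) - ∫ l in (0:ℝ)..(t/2), g l := by
        funext t
        rw [intervalIntegral.integral_interval_sub_left
          (hgcont.intervalIntegrable _ _) (hgcont.intervalIntegrable _ _)]
      rw [hδeq]
      have h1 : HasDerivAt (fun t => ∫ l in (0:ℝ)..t, g l) (g s) s :=
        intervalIntegral.integral_hasDerivAt_right (hgcont.intervalIntegrable _ _)
          (hgcont.stronglyMeasurableAtFilter _ _) hgcont.continuousAt
      have h2 : HasDerivAt (fun t : ℝ => t/2) (1/2) s := by
        simpa using (hasDerivAt_id s).div_const 2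
      have h3 : HasDerivAt (fun t => ∫ l in (0:ℝ)..(t/2), g l) (g (s/2) * (1/2)) s := by
        have := (intervalIntegral.integral_hasDerivAt_right
          (hgcont.intervalIntegrable 0 (s/2))
          (hgcont.stronglyMeasurableAtFilter _ _) hgcont.continuousAt).comp s h2
        exact this
      exact h1.sub h3
    have hgs2 : g (s/2) = δₐ (s/2) * δₐ s * ω (s/2) / (1 + s^2) := by
      simp only [hg_def]
      norm_num [mul_div_assoc]
      ring_nf
    have hD : g s - g (s/2) * (1/2)
        = δₐ s * δₐ (2*s) * ω s / (1 + 4*s^2)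
          - (1/2) * (δₐ (s/2) * δₐ s * ω (s/2) / (1 + s^2)) := by
      rw [hgs2]; ring
    constructor
    · rw [← hD]; exact hderiv
    · have hb1 : |δₐ s * δₐ (2*s) * ω s / (1 + 4*s^2)| ≤ ω s := by
        obtain ⟨ha1, ha2⟩ := hδₐ01 s hs
        obtain ⟨hb1', hb2'⟩ := hδₐ01 (2*s) (by linarith)
        obtain ⟨hc1, hc2⟩ := hω01 s hs
        rw [abs_of_nonneg (by positivity), div_le_iff₀ (by positivity)]
        have h1 : δₐ s * δₐ (2*s) * ω s ≤ ω s := by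
          nlinarith [mul_nonneg hb1' hc1.le, mul_nonneg ha1 hc1.le]
        nlinarith [mul_nonneg hc1.le (sq_nonneg s)]
      have hb2 : |δₐ (s/2) * δₐ s * ω (s/2) / (1 + s^2)| ≤ ω (s/2) := by
        obtain ⟨ha1, ha2⟩ := hδₐ01 (s/2) (by linarith)
        obtain ⟨hb1', hb2'⟩ := hδₐ01 s hs
        obtain ⟨hc1, hc2⟩ := hω01 (s/2) (by linarith)
        rw [abs_of_nonneg (by positivity), div_le_iff₀ (by positivity)]
        have h1 : δₐ (s/2) * δₐ s * ω (s/2) ≤ ω (s/2) := by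
          nlinarith [mul_nonneg hb1' hc1.le, mul_nonneg ha1 hc1.le]
        nlinarith [mul_nonneg hc1.le (sq_nonneg s)]
      calc |δₐ s * δₐ (2*s) * ω s / (1 + 4*s^2)
          - (1/2) * (δₐ (s/2) * δₐ s * ω (s/2) / (1 + s^2))|
          ≤ |δₐ s * δₐ (2*s) * ω s / (1 + 4*s^2)|
            + |(1/2) * (δₐ (s/2) * δₐ s * ω (s/2) / (1 + s^2))| := abs_sub _ _
        _ ≤ ω s + (1/2) * ω (s/2) := by
            rw [abs_mul]
            have : |(1/2 : ℝ)| = 1/2 := by norm_num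
            rw [this]
            nlinarith [hb1, hb2]
end

section
/- Define on ℝ⁴: V(x) = (1/2)[(x₃²+1)x₂² + x₄² + √(1+x₁²) + √(1+x₃²) − 2] and L_G V(x) = (x₃²+1)x₂x₁ + x₄x₃. Then the function V♯(x) = 40(2 + 2V(x))⁶ + L_G V(x) − 40·2⁶ satisfies 3(x₁² + x₂² + x₃² + x₄²) ≤ V♯(x) ≤ 80(2 + 2V(x))⁶ for all x ∈ ℝ⁴. In particular V♯ is positive definite and radially unbounded. -/
lemma aux9 {p T q S : ℝ} (hp : 0 ≤ p) (hT0 : 0 ≤ T) (hq0 : 2 ≤ q)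
    (hq2 : 4 + p ≤ q^2) (hS : S = T + q) :
    160*p^2 + 1280*p + 5120*T ≤ 40*S^6 - 2560 := by
  have hS2 : 2 ≤ S := by linarith
  have hS4 : (4 + p)^2 + 32*T ≤ S^4 := by
    have expand : S^4 = q^4 + 4*T*q^3 + 6*T^2*q^2 + 4*T^3*q + T^4 := by
      rw [hS]; ring
    have h2 : (4 + p)^2 ≤ q^4 := by nlinarith
    have h3 : (8:ℝ) ≤ q^3 := by nlinarith
    have h4 : 32*T ≤ 4*T*q^3 := by nlinarith [mul_le_mul_of_nonneg_left h3 (by linarith : (0:ℝ) ≤ 4*T)]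
    nlinarith [mul_nonneg (mul_nonneg hT0 hT0) (sq_nonneg q), sq_nonneg (T^2),
      mul_nonneg (mul_nonneg (mul_nonneg hT0 hT0) hT0) (by linarith : (0:ℝ) ≤ q)]
  have hS6 : 4*S^4 ≤ S^6 := by
    have h : 0 ≤ S^4*(S^2-4) := by
      apply mul_nonneg (by positivity); nlinarith
    nlinarith [h]
  have hexp : (4+p)^2 = 16 + 8*p + p^2 := by ring
  linarith

lemma key9 {a b c d u w : ℝ} (hu1 : 1 ≤ u) (hw1 : 1 ≤ w)
    (hu : u^2 = 1 + a^2) (hw : w^2 = 1 + c^2) :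
    3*(a^2+b^2+c^2+d^2) ≤
      40*((c^2+1)*b^2+d^2+u+w)^6 + ((c^2+1)*b*a + d*c) - 40*2^6 ∧
    40*((c^2+1)*b^2+d^2+u+w)^6 + ((c^2+1)*b*a + d*c) - 40*2^6 ≤
      80*((c^2+1)*b^2+d^2+u+w)^6 := by
  have hq2 : 4 + (a^2+c^2) ≤ (u+w)^2 := by nlinarith
  have hKey := aux9 (p := a^2+c^2) (T := (c^2+1)*b^2+d^2) (q := u+w)
    (S := (c^2+1)*b^2+d^2+u+w) (by positivity) (by positivity) (by linarith) hq2 (by ring)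
  have hPnn : (0:ℝ) ≤ ((c^2+1)*b^2+d^2+u+w)^6 := by positivity
  obtain ⟨P, hP⟩ : ∃ P : ℝ, ((c^2+1)*b^2+d^2+u+w)^6 = P := ⟨_, rfl⟩
  rw [hP] at hKey hPnn ⊢
  clear hP hq2 hu hw hu1 hw1
  have hLower : 3*(a^2+b^2+c^2+d^2) - ((c^2+1)*b*a + d*c) ≤
      160*(a^2+c^2)^2 + 1280*(a^2+c^2) + 5120*((c^2+1)*b^2+d^2) := by
    nlinarith [mul_nonneg (by positivity : (0:ℝ) ≤ c^2+1) (sq_nonneg (a+b)),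
      sq_nonneg (c+d), sq_nonneg (a*c), sq_nonneg (a^2), sq_nonneg (c^2)]
  have hUpper : (c^2+1)*b*a + d*c ≤
      160*(a^2+c^2)^2 + 1280*(a^2+c^2) + 5120*((c^2+1)*b^2+d^2) + 5120 := by
    nlinarith [mul_nonneg (by positivity : (0:ℝ) ≤ c^2+1) (sq_nonneg (a-b)),
      sq_nonneg (c-d), sq_nonneg (a*c), sq_nonneg (a^2), sq_nonneg (c^2)]
  constructor
  · linarith
  · linarith

theorem stmt9 :
    let V : EuclideanSpace ℝ (Fin 4) → ℝ := fun x =>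
      (1/2) * (((x 2)^2 + 1) * (x 1)^2 + (x 3)^2
        + Real.sqrt (1 + (x 0)^2) + Real.sqrt (1 + (x 2)^2) - 2)
    let LGV : EuclideanSpace ℝ (Fin 4) → ℝ := fun x =>
      ((x 2)^2 + 1) * (x 1) * (x 0) + (x 3) * (x 2)
    let Vsharp : EuclideanSpace ℝ (Fin 4) → ℝ := fun x =>
      40 * (2 + 2 * V x)^6 + LGV x - 40 * 2^6
    (∀ x, 3 * ((x 0)^2 + (x 1)^2 + (x 2)^2 + (x 3)^2) ≤ Vsharp x ∧
          Vsharp x ≤ 80 * (2 + 2 * V x)^6) ∧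
    (Vsharp 0 = 0 ∧ ∀ x, x ≠ 0 → 0 < Vsharp x) ∧
    (∀ M : ℝ, ∃ R : ℝ, ∀ x, R ≤ ‖x‖ → M ≤ Vsharp x) := by
  intro V LGV Vsharp
  have hmain : ∀ x : EuclideanSpace ℝ (Fin 4),
      3 * ((x 0)^2 + (x 1)^2 + (x 2)^2 + (x 3)^2) ≤ Vsharp x ∧
        Vsharp x ≤ 80 * (2 + 2 * V x)^6 := by
    intro x
    set a := x 0; set b := x 1; set c := x 2; set d := x 3
    have hu : (Real.sqrt (1 + a^2))^2 = 1 + a^2 := Real.sq_sqrt (by positivity)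
    have hw : (Real.sqrt (1 + c^2))^2 = 1 + c^2 := Real.sq_sqrt (by positivity)
    have hu1 : 1 ≤ Real.sqrt (1 + a^2) := by
      nlinarith [Real.sqrt_nonneg (1 + a^2), sq_nonneg a]
    have hw1 : 1 ≤ Real.sqrt (1 + c^2) := by
      nlinarith [Real.sqrt_nonneg (1 + c^2), sq_nonneg c]
    have hk := key9 (b := b) (d := d) hu1 hw1 hu hw
    have hV : 2 + 2 * V x = (c^2+1)*b^2+d^2+Real.sqrt (1+a^2)+Real.sqrt (1+c^2) := by
      show 2 + 2 * ((1/2) * ((c^2 + 1) * b^2 + d^2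
        + Real.sqrt (1 + a^2) + Real.sqrt (1 + c^2) - 2)) = _
      ring
    have hL : LGV x = (c^2+1)*b*a + d*c := rfl
    constructor
    · show 3 * (a^2 + b^2 + c^2 + d^2) ≤ 40 * (2 + 2 * V x)^6 + LGV x - 40 * 2^6
      rw [hV, hL]; linarith [hk.1]
    · show 40 * (2 + 2 * V x)^6 + LGV x - 40 * 2^6 ≤ 80 * (2 + 2 * V x)^6
      rw [hV, hL]; linarith [hk.2]
  have hnorm : ∀ x : EuclideanSpace ℝ (Fin 4),
      ‖x‖^2 = (x 0)^2 + (x 1)^2 + (x 2)^2 + (x 3)^2 := by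
    intro x
    rw [EuclideanSpace.norm_eq, Real.sq_sqrt (by positivity)]
    simp [Fin.sum_univ_four, sq_abs]
  refine ⟨hmain, ⟨?_, ?_⟩, ?_⟩
  · show 40 * (2 + 2 * V 0)^6 + LGV 0 - 40 * 2^6 = 0
    have h0 : ∀ i : Fin 4, (0 : EuclideanSpace ℝ (Fin 4)) i = 0 := fun i => rfl
    have hV0 : V 0 = 0 := by
      show (1/2) * (((0:ℝ)^2 + 1) * (0:ℝ)^2 + (0:ℝ)^2
        + Real.sqrt (1 + (0:ℝ)^2) + Real.sqrt (1 + (0:ℝ)^2) - 2) = 0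
      norm_num
    have hL0 : LGV 0 = 0 := by
      show ((0:ℝ)^2 + 1) * (0:ℝ) * (0:ℝ) + (0:ℝ) * (0:ℝ) = 0
      norm_num
    rw [hV0, hL0]; norm_num
  · intro x hx
    have h := (hmain x).1
    have hpos : 0 < (x 0)^2 + (x 1)^2 + (x 2)^2 + (x 3)^2 := by
      rw [← hnorm]
      have : 0 < ‖x‖ := norm_pos_iff.mpr hx
      positivity
    linarith
  · intro M
    refine ⟨Real.sqrt (max M 0), fun x hR => ?_⟩
    have h1 : max M 0 ≤ ‖x‖^2 := by
      have hs : (0:ℝ) ≤ Real.sqrt (max M 0) := Real.sqrt_nonneg _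
      have := Real.sq_sqrt (le_max_right M 0)
      nlinarith [hR, hs]
    have h2 := (hmain x).1
    have h3 : 0 ≤ (x 0)^2 + (x 1)^2 + (x 2)^2 + (x 3)^2 := by positivity
    calc M ≤ max M 0 := le_max_left M 0
      _ ≤ ‖x‖^2 := h1
      _ = (x 0)^2 + (x 1)^2 + (x 2)^2 + (x 3)^2 := hnorm x
      _ ≤ 3 * ((x 0)^2 + (x 1)^2 + (x 2)^2 + (x 3)^2) := by linarith
      _ ≤ Vsharp x := h2
end
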